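/- If R₀ = β(0)/(μ+ν) ≤ 1, then any nonnegative solution of I' ≤ I(β(0)(1−I) − (μ+ν)) with I(0) ∈ [0,1] satisfies I(t) → 0 as t → ∞. -/

import Mathlib

open Filter Topology Set

/-!
Since `β(0) ≤ μ + ν`, the differential inequality gives `I' ≤ -β(0) I²` as long as `I ≥ 0`.
Hence `I` is nonincreasing, and it cannot stay above any `ε > 0`: otherwise it would
decrease at least linearly, with slope `β(0) ε²`, and become negative.
-/

section DerivBounds

variable {f f' : ℝ → ℝ} {a : ℝ}

theorem image_sub_le_mul_sub_of_hasDerivAt_le_on_Ici {C : ℝ}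
    (hf : ∀ t, a ≤ t → HasDerivAt f (f' t) t) (hf' : ∀ t, a ≤ t → f' t ≤ C)
    {s t : ℝ} (hs : a ≤ s) (hst : s ≤ t) : f t - f s ≤ C * (t - s) := by
  refine (convex_Ici a).image_sub_le_mul_sub_of_deriv_le
    (fun x hx => (hf x hx).continuousAt.continuousWithinAt)
    (fun x hx => (hf x (interior_subset hx)).differentiableAt.differentiableWithinAt)
    (fun x hx => ?_) s hs t (hs.trans hst) hst
  rw [(hf x (interior_subset hx)).deriv]
  exact hf' x (interior_subset hx)

theorem antitoneOn_Ici_of_hasDerivAt_nonpos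
    (hf : ∀ t, a ≤ t → HasDerivAt f (f' t) t) (hf' : ∀ t, a ≤ t → f' t ≤ 0) :
    AntitoneOn f (Ici a) := fun s hs t ht hst => by
  have := image_sub_le_mul_sub_of_hasDerivAt_le_on_Ici hf hf' hs hst
  linarith

theorem tendsto_zero_of_hasDerivAt_le_neg_mul_sq {k : ℝ} (hk : 0 < k)
    (hf : ∀ t, a ≤ t → HasDerivAt f (f' t) t) (hf' : ∀ t, a ≤ t → f' t ≤ -k * f t ^ 2)
    (hf_nonneg : ∀ t, a ≤ t → 0 ≤ f t) : Tendsto f atTop (𝓝 0) := by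
  have hanti : AntitoneOn f (Ici a) := antitoneOn_Ici_of_hasDerivAt_nonpos hf fun t ht => by
    nlinarith [hf' t ht, sq_nonneg (f t)]
  have hsmall : ∀ ε > 0, ∃ T, a ≤ T ∧ f T < ε := by
    intro ε hε
    by_contra! hlarge
    have hslope : ∀ t, a ≤ t → f' t ≤ -(k * ε ^ 2) := fun t ht => by
      have hsq : ε ^ 2 ≤ f t ^ 2 := pow_le_pow_left₀ hε.le (hlarge t ht) 2
      nlinarith [hf' t ht]
    set T := a + f a / (k * ε ^ 2)
    have hT : a ≤ T := le_add_of_nonneg_right (by positivity [hf_nonneg a le_rfl])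
    have hdrop : f T - f a ≤ -(k * ε ^ 2) * (T - a) :=
      image_sub_le_mul_sub_of_hasDerivAt_le_on_Ici hf hslope le_rfl hT
    have hkε : k * ε ^ 2 * (T - a) = f a := by
      simp only [T, add_sub_cancel_left]
      field_simp
    linarith [hlarge T hT]
  refine tendsto_order.2 ⟨fun b hb => eventually_atTop.2 ⟨a, fun t ht => hb.trans_le
    (hf_nonneg t ht)⟩, fun b hb => ?_⟩
  obtain ⟨T, hT, hfT⟩ := hsmall b hb
  exact eventually_atTop.2 ⟨T, fun t ht => (hanti hT (hT.trans ht) ht).trans_lt hfT⟩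

end DerivBounds

theorem prevalence_tendsto_zero_of_R0_le_one_general
    (μ ν β0 : ℝ) (hμ : 0 < μ) (hν : 0 < ν) (hβ0 : 0 < β0)
    (I : ℝ → ℝ) (I' : ℝ → ℝ)
    (hderiv : ∀ t, 0 ≤ t → HasDerivAt I (I' t) t)
    (hineq : ∀ t, 0 ≤ t → I' t ≤ I t * (β0 * (1 - I t) - (μ + ν)))
    (hrange : ∀ t, 0 ≤ t → I t ∈ Set.Icc (0:ℝ) 1)
    (hR0 : β0 / (μ + ν) ≤ 1) :
    Tendsto I atTop (𝓝 0) := by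
  have hβ0_le : β0 ≤ μ + ν := (div_le_one (by positivity)).mp hR0
  refine tendsto_zero_of_hasDerivAt_le_neg_mul_sq hβ0 hderiv (fun t ht => ?_)
    (fun t ht => (hrange t ht).1)
  have hI := (hrange t ht).1
  nlinarith [hineq t ht, mul_nonneg (sub_nonneg.2 hβ0_le) hI]

/-- If `R₀ = β(0)/(μ+ν) ≤ 1`, any nonnegative solution of the
differential inequality `I' ≤ I(β(0)(1−I) − (μ+ν))` with `I(0) ∈ [0,1]`
satisfies `I(t) → 0` as `t → ∞`. -/
theorem prevalence_tendsto_zero_of_R0_le_one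
    (μ ν β0 : ℝ) (hμ : 0 < μ) (hν : 0 < ν) (hβ0 : 0 < β0)
    (I : ℝ → ℝ) (I' : ℝ → ℝ)
    (hderiv : ∀ t, 0 ≤ t → HasDerivAt I (I' t) t)
    (hineq : ∀ t, 0 ≤ t → I' t ≤ I t * (β0 * (1 - I t) - (μ + ν)))
    (hrange : ∀ t, 0 ≤ t → I t ∈ Set.Icc (0:ℝ) 1)
    (hI0 : I 0 ∈ Set.Icc (0:ℝ) 1)
    (hR0 : β0 / (μ + ν) ≤ 1) :
    Tendsto I atTop (𝓝 0) :=
  prevalence_tendsto_zero_of_R0_le_one_general μ ν β0 hμ hν hβ0 I I' hderiv hineq hrange hR0
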